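/- arXiv:2303.15112 — 2 statements merged into one kernel-verified Lean document; each statement's English description precedes it below -/
import Mathlib

section
/- Among all g : {1,...,M} → {1, 2/π} with exactly M_0 values equal to 1 (M_0 even, M_0, M_1 = M - M_0 ≥ 1), the quantity S(g) = Σ_{1≤i<j≤M} g_i g_j (j-i)^2 is maximized by the arrangement placing the value 1 at positions 1,...,M_0/2 and M - M_0/2 + 1,...,M, and 2/π elsewhere. -/
open Finset

/-- The arrangement objective `S(g) = Σ_{1 ≤ i < j ≤ M} g_i g_j (j-i)^2`. -/
noncomputable def S (M : ℕ) (g : ℕ → ℝ) : ℝ :=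
  ∑ i ∈ Finset.Icc 1 M, ∑ j ∈ Finset.Icc 1 M,
    (if i < j then g i * g j * ((j : ℝ) - (i : ℝ)) ^ 2 else 0)

/-- centered coordinate -/
noncomputable def tt (M i : ℕ) : ℝ := (i : ℝ) - ((M : ℝ) + 1) / 2

lemma two_S (M : ℕ) (g : ℕ → ℝ) :
    2 * S M g = ∑ i ∈ Finset.Icc 1 M, ∑ j ∈ Finset.Icc 1 M,
      g i * g j * ((j : ℝ) - (i : ℝ)) ^ 2 := by
  unfold S
  rw [two_mul]
  have hswap : (∑ i ∈ Finset.Icc 1 M, ∑ j ∈ Finset.Icc 1 M,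
      (if i < j then g i * g j * ((j : ℝ) - (i : ℝ)) ^ 2 else 0))
      = ∑ i ∈ Finset.Icc 1 M, ∑ j ∈ Finset.Icc 1 M,
      (if j < i then g i * g j * ((j : ℝ) - (i : ℝ)) ^ 2 else 0) := by
    rw [Finset.sum_comm]
    refine Finset.sum_congr rfl fun i _ => Finset.sum_congr rfl fun j _ => ?_
    by_cases h : j < i
    · simp only [if_pos h]; ring
    · simp only [if_neg h]
  nth_rewrite 2 [hswap]
  rw [← Finset.sum_add_distrib]
  refine Finset.sum_congr rfl fun i _ => ?_
  rw [← Finset.sum_add_distrib]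
  refine Finset.sum_congr rfl fun j _ => ?_
  rcases lt_trichotomy i j with h | h | h
  · rw [if_pos h, if_neg (by omega), add_zero]
  · subst h; simp
  · rw [if_neg (by omega), if_pos h, zero_add]

lemma S_eq (M : ℕ) (g : ℕ → ℝ) :
    S M g = (∑ i ∈ Finset.Icc 1 M, g i) * (∑ i ∈ Finset.Icc 1 M, g i * (tt M i) ^ 2)
      - (∑ i ∈ Finset.Icc 1 M, g i * tt M i) ^ 2 := by
  have h2 := two_S M g
  have h3 : ∑ i ∈ Finset.Icc 1 M, ∑ j ∈ Finset.Icc 1 M, g i * g j * ((j : ℝ) - (i : ℝ)) ^ 2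
      = (∑ i ∈ Finset.Icc 1 M, g i * (tt M i) ^ 2) * (∑ i ∈ Finset.Icc 1 M, g i)
        + (∑ i ∈ Finset.Icc 1 M, g i) * (∑ i ∈ Finset.Icc 1 M, g i * (tt M i) ^ 2)
        - 2 * ((∑ i ∈ Finset.Icc 1 M, g i * tt M i) * (∑ i ∈ Finset.Icc 1 M, g i * tt M i)) := by
    rw [Finset.sum_mul_sum, Finset.sum_mul_sum, Finset.sum_mul_sum, Finset.mul_sum,
      ← Finset.sum_add_distrib, ← Finset.sum_sub_distrib]
    refine Finset.sum_congr rfl fun i _ => ?_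
    rw [Finset.mul_sum, ← Finset.sum_add_distrib, ← Finset.sum_sub_distrib]
    refine Finset.sum_congr rfl fun j _ => ?_
    unfold tt; ring
  rw [h3] at h2
  linarith


lemma cast_refl (M a : ℕ) (h1 : 1 ≤ a) (h2 : a ≤ M) :
    ((M + 1 - a : ℕ) : ℝ) = (M : ℝ) + 1 - (a : ℝ) := by
  have : a ≤ M + 1 := by omega
  push_cast [Nat.cast_sub this]
  ring

lemma sum_tt_zero (M : ℕ) (s : Finset ℕ)
    (hs : ∀ i ∈ s, 1 ≤ i ∧ i ≤ M ∧ M + 1 - i ∈ s) :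
    ∑ i ∈ s, tt M i = 0 := by
  have h : ∑ i ∈ s, tt M i = ∑ i ∈ s, (-(tt M i)) := by
    refine Finset.sum_nbij' (fun i => M + 1 - i) (fun i => M + 1 - i) ?_ ?_ ?_ ?_ ?_
    · intro a ha; exact (hs a ha).2.2
    · intro a ha; exact (hs a ha).2.2
    · intro a ha; have := hs a ha; show M + 1 - (M + 1 - a) = a; omega
    · intro a ha; have := hs a ha; show M + 1 - (M + 1 - a) = a; omega
    · intro a ha
      have h1 := (hs a ha).1
      have h2 := (hs a ha).2.1
      have h3 := (hs (M + 1 - a) ((hs a ha).2.2)).1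
      unfold tt
      rw [cast_refl M a h1 h2]
      ring
  have h2 : ∑ i ∈ s, (-(tt M i)) = -∑ i ∈ s, tt M i := by
    rw [Finset.sum_neg_distrib]
  rw [h2] at h
  linarith

lemma sum_split (Mx : ℕ) (g : ℕ → ℝ) (a : ℝ) (ha : a ≠ 1)
    (hv : ∀ i ∈ Finset.Icc 1 Mx, g i = 1 ∨ g i = a) (f : ℕ → ℝ) :
    ∑ i ∈ Finset.Icc 1 Mx, g i * f i
      = a * ∑ i ∈ Finset.Icc 1 Mx, f i
        + (1 - a) * ∑ i ∈ (Finset.Icc 1 Mx).filter (fun i => g i = 1), f i := by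
  classical
  rw [Finset.sum_filter, Finset.mul_sum, Finset.mul_sum, ← Finset.sum_add_distrib]
  refine Finset.sum_congr rfl fun i hi => ?_
  rcases hv i hi with h | h
  · rw [h]; norm_num; ring
  · rw [h, if_neg ha]; ring

lemma sum_sq_le (M k : ℕ) (hk : 2 * k + 1 ≤ M) (A B : Finset ℕ)
    (hA : A ⊆ Finset.Icc 1 M)
    (hB : B = (Finset.Icc 1 M).filter (fun i => i ≤ k ∨ M - k + 1 ≤ i))
    (hcard : A.card = B.card) :
    ∑ i ∈ A, (tt M i) ^ 2 ≤ ∑ i ∈ B, (tt M i) ^ 2 := by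
  classical
  set b : ℝ := ((M : ℝ) + 1) / 2 - (k : ℝ) with hb
  have hub : ∀ i ∈ A \ B, (tt M i) ^ 2 ≤ b ^ 2 := by
    intro i hi
    have hiA := Finset.mem_sdiff.1 hi
    have hIcc := Finset.mem_Icc.1 (hA hiA.1)
    have hnB := hiA.2
    rw [hB, Finset.mem_filter] at hnB
    have hcond : ¬ (i ≤ k ∨ M - k + 1 ≤ i) := by
      intro hc; exact hnB ⟨Finset.mem_Icc.2 hIcc, hc⟩
    have h1 : k + 1 ≤ i := by omega
    have h2 : i ≤ M - k := by omega
    have h1' : (k : ℝ) + 1 ≤ (i : ℝ) := by exact_mod_cast h1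
    have h2' : (i : ℝ) ≤ (M : ℝ) - (k : ℝ) := by
      have : (i : ℝ) ≤ ((M - k : ℕ) : ℝ) := by exact_mod_cast h2
      have hkM : k ≤ M := by omega
      rwa [Nat.cast_sub hkM] at this
    unfold tt
    nlinarith [mul_nonneg (by linarith : (0:ℝ) ≤ (i : ℝ) - k)
      (by linarith : (0:ℝ) ≤ (M : ℝ) + 1 - (k : ℝ) - (i : ℝ))]
  have hlb : ∀ i ∈ B \ A, b ^ 2 ≤ (tt M i) ^ 2 := by
    intro i hi
    have hiB := (Finset.mem_sdiff.1 hi).1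
    rw [hB, Finset.mem_filter] at hiB
    have hIcc := Finset.mem_Icc.1 hiB.1
    unfold tt
    rcases hiB.2 with h | h
    · have h' : (i : ℝ) ≤ (k : ℝ) := by exact_mod_cast h
      have h1 : (1 : ℝ) ≤ (i : ℝ) := by exact_mod_cast hIcc.1
      have hM : 2 * (k : ℝ) + 1 ≤ (M : ℝ) := by exact_mod_cast hk
      nlinarith [mul_nonneg (by linarith : (0:ℝ) ≤ (k : ℝ) - (i : ℝ))
        (by linarith : (0:ℝ) ≤ (M : ℝ) + 1 - (i : ℝ) - (k : ℝ))]
    · have h' : (M : ℝ) - (k : ℝ) + 1 ≤ (i : ℝ) := by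
        have hkM : k ≤ M := by omega
        have : ((M - k + 1 : ℕ) : ℝ) ≤ (i : ℝ) := by exact_mod_cast h
        rwa [Nat.cast_add, Nat.cast_sub hkM, Nat.cast_one] at this
      have h2 : (i : ℝ) ≤ (M : ℝ) := by exact_mod_cast hIcc.2
      have hM : 2 * (k : ℝ) + 1 ≤ (M : ℝ) := by exact_mod_cast hk
      nlinarith [mul_nonneg (by linarith : (0:ℝ) ≤ (i : ℝ) - ((M:ℝ) - k + 1) + 1)
        (by linarith : (0:ℝ) ≤ (i : ℝ) + (k : ℝ) - (M : ℝ) - 1 + ((M:ℝ) + 1 - 2*k))]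
  have hcards : (A \ B).card = (B \ A).card := by
    have h1 := Finset.card_sdiff_add_card_inter A B
    have h2 := Finset.card_sdiff_add_card_inter B A
    rw [Finset.inter_comm] at h2
    omega
  have step1 : ∑ i ∈ A \ B, (tt M i) ^ 2 ≤ ∑ i ∈ B \ A, (tt M i) ^ 2 := by
    calc ∑ i ∈ A \ B, (tt M i) ^ 2 ≤ (A \ B).card • b ^ 2 :=
          Finset.sum_le_card_nsmul _ _ _ hub
      _ = (B \ A).card • b ^ 2 := by rw [hcards]
      _ ≤ ∑ i ∈ B \ A, (tt M i) ^ 2 := Finset.card_nsmul_le_sum _ _ _ hlb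
  have eA := Finset.sum_inter_add_sum_sdiff A B (fun i => (tt M i) ^ 2)
  have eB := Finset.sum_inter_add_sum_sdiff B A (fun i => (tt M i) ^ 2)
  rw [Finset.inter_comm] at eB
  linarith


lemma S_formula (Mx : ℕ) (a : ℝ) (ha : a ≠ 1) (g : ℕ → ℝ)
    (hv : ∀ i ∈ Finset.Icc 1 Mx, g i = 1 ∨ g i = a)
    (hz : ∑ i ∈ Finset.Icc 1 Mx, tt Mx i = 0) :
    S Mx g = (a * Mx + (1 - a) * ((Finset.Icc 1 Mx).filter (fun i => g i = 1)).card)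
        * (a * (∑ i ∈ Finset.Icc 1 Mx, (tt Mx i) ^ 2)
           + (1 - a) * ∑ i ∈ (Finset.Icc 1 Mx).filter (fun i => g i = 1), (tt Mx i) ^ 2)
      - ((1 - a) * ∑ i ∈ (Finset.Icc 1 Mx).filter (fun i => g i = 1), tt Mx i) ^ 2 := by
  have e0 : ∑ i ∈ Finset.Icc 1 Mx, g i
      = a * Mx + (1 - a) * ((Finset.Icc 1 Mx).filter (fun i => g i = 1)).card := by
    have h := sum_split Mx g a ha hv (fun _ => (1:ℝ))
    simp only [mul_one] at h
    rw [h, Finset.sum_const, Finset.sum_const, Nat.card_Icc]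
    simp
  have e1 := sum_split Mx g a ha hv (fun i => tt Mx i)
  have e2 := sum_split Mx g a ha hv (fun i => (tt Mx i) ^ 2)
  rw [S_eq, e0, e1, e2, hz]
  ring

theorem stmt9 (M M0 M1 : ℕ) (hM0 : 1 ≤ M0) (hM1 : 1 ≤ M1) (hM : M = M0 + M1)
    (hM0even : Even M0)
    (g : ℕ → ℝ)
    (hval : ∀ i ∈ Finset.Icc 1 M, g i = 1 ∨ g i = 2 / Real.pi)
    (hcard : ((Finset.Icc 1 M).filter (fun i => g i = 1)).card = M0) :
    S M g ≤ S M (fun j => if j ≤ M0 / 2 ∨ M - M0 / 2 + 1 ≤ j then 1 else 2 / Real.pi) := by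
  have hpi : (2:ℝ) < Real.pi := by nlinarith [Real.pi_gt_d6]
  have hpi0 : (0:ℝ) < Real.pi := by linarith
  set a : ℝ := 2 / Real.pi with ha
  have ha0 : 0 < a := by positivity
  have ha1 : a < 1 := by rw [ha, div_lt_one hpi0]; linarith
  have hane : a ≠ 1 := ne_of_lt ha1
  set k := M0 / 2 with hkdef
  have hk2 : M0 = 2 * k := by obtain ⟨r, hr⟩ := hM0even; omega
  have hkM : 2 * k + 1 ≤ M := by omega
  have hzIcc : ∑ i ∈ Finset.Icc 1 M, tt M i = 0 := by
    apply sum_tt_zero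
    intro i hi
    simp only [Finset.mem_Icc] at hi ⊢
    omega
  set gs : ℕ → ℝ := fun j => if j ≤ k ∨ M - k + 1 ≤ j then 1 else a with hgsdef
  have hvs : ∀ i ∈ Finset.Icc 1 M, gs i = 1 ∨ gs i = a := by
    intro i _
    rw [hgsdef]
    dsimp only
    split_ifs
    exacts [Or.inl rfl, Or.inr rfl]
  have hfilter : (Finset.Icc 1 M).filter (fun i => gs i = 1)
      = (Finset.Icc 1 M).filter (fun i => i ≤ k ∨ M - k + 1 ≤ i) := by
    apply Finset.filter_congr
    intro i _
    rw [hgsdef]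
    dsimp only
    split_ifs with h
    · simp [h]; omega
    · simp [h, hane]; omega
  have hBcard : ((Finset.Icc 1 M).filter (fun i => i ≤ k ∨ M - k + 1 ≤ i)).card = M0 := by
    have hBeq : (Finset.Icc 1 M).filter (fun i => i ≤ k ∨ M - k + 1 ≤ i)
        = Finset.Icc 1 k ∪ Finset.Icc (M - k + 1) M := by
      ext i
      simp only [Finset.mem_filter, Finset.mem_Icc, Finset.mem_union]
      omega
    have hdisj : Disjoint (Finset.Icc 1 k) (Finset.Icc (M - k + 1) M) := by
      rw [Finset.disjoint_left]
      intro x hx hx2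
      simp only [Finset.mem_Icc] at hx hx2
      omega
    rw [hBeq, Finset.card_union_of_disjoint hdisj, Nat.card_Icc, Nat.card_Icc]
    omega
  have hzB : ∑ i ∈ (Finset.Icc 1 M).filter (fun i => i ≤ k ∨ M - k + 1 ≤ i), tt M i = 0 := by
    apply sum_tt_zero
    intro i hi
    simp only [Finset.mem_filter, Finset.mem_Icc] at hi ⊢
    omega
  have hQ : ∑ i ∈ (Finset.Icc 1 M).filter (fun i => g i = 1), (tt M i) ^ 2
      ≤ ∑ i ∈ (Finset.Icc 1 M).filter (fun i => i ≤ k ∨ M - k + 1 ≤ i), (tt M i) ^ 2 :=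
    sum_sq_le M k hkM _ _ (Finset.filter_subset _ _) rfl (by rw [hcard, hBcard])
  rw [S_formula M a hane g hval hzIcc, S_formula M a hane gs hvs hzIcc, hfilter, hcard,
    hBcard, hzB]
  have hP : (0:ℝ) ≤ a * M + (1 - a) * M0 :=
    add_nonneg (mul_nonneg ha0.le (Nat.cast_nonneg M))
      (mul_nonneg (by linarith) (Nat.cast_nonneg M0))
  nlinarith [sq_nonneg ((1 - a) * ∑ i ∈ (Finset.Icc 1 M).filter (fun i => g i = 1), tt M i),
    mul_nonneg hP (mul_nonneg (by linarith : (0:ℝ) ≤ 1 - a) (sub_nonneg.2 hQ))]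
end

section
/- Let a < b be positive reals, M ≥ 4, and consider g, g' : {1,...,M} → {a, b} each with exactly 2 values equal to b. If g places b at positions 1 and M, and g' places b at any other pair of positions, then S(g) ≥ S(g'), with equality iff g' also places b at positions 1 and M. -/
open Finset

/-- weight of a pair -/
noncomputable def W (i j : ℕ) : ℝ := if i < j then ((j : ℝ) - (i : ℝ)) ^ 2 else 0

/-- baseline sum -/
noncomputable def AA (M : ℕ) : ℝ := ∑ i ∈ Icc 1 M, ∑ j ∈ Icc 1 M, W i j

/-- second moment about position p -/
noncomputable def TT (M p : ℕ) : ℝ := ∑ j ∈ Icc 1 M, ((j : ℝ) - (p : ℝ)) ^ 2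

lemma sumId (M : ℕ) : ∑ j ∈ Icc 1 M, (j : ℝ) = M * (M + 1) / 2 := by
  induction M with
  | zero => simp
  | succ n ih =>
    rw [Finset.sum_Icc_succ_top (by omega), ih]
    push_cast; ring

lemma Tdiff (M p : ℕ) : TT M 1 - TT M p = ((p : ℝ) - 1) * M * ((M : ℝ) - p) := by
  have h : TT M 1 - TT M p
      = ∑ j ∈ Icc 1 M, (((p : ℝ) - 1) * (2 * (j : ℝ) - (p : ℝ) - 1)) := by
    rw [TT, TT, ← Finset.sum_sub_distrib]
    refine Finset.sum_congr rfl fun j _ => by push_cast; ring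
  rw [h, ← Finset.mul_sum]
  have h2 : ∑ j ∈ Icc 1 M, (2 * (j : ℝ) - (p : ℝ) - 1)
      = 2 * (M * (M + 1) / 2) - M * ((p : ℝ) + 1) := by
    have hc : ((Icc 1 M).card : ℝ) = M := by simp [Nat.card_Icc]
    calc ∑ j ∈ Icc 1 M, (2 * (j : ℝ) - (p : ℝ) - 1)
        = (∑ j ∈ Icc 1 M, 2 * (j : ℝ)) - ∑ j ∈ Icc 1 M, ((p : ℝ) + 1) := by
          rw [← Finset.sum_sub_distrib]; refine Finset.sum_congr rfl fun j _ => by ring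
      _ = 2 * (∑ j ∈ Icc 1 M, (j : ℝ)) - ((Icc 1 M).card : ℝ) * ((p : ℝ) + 1) := by
          rw [← Finset.mul_sum, Finset.sum_const, nsmul_eq_mul]
      _ = 2 * (M * (M + 1) / 2) - M * ((p : ℝ) + 1) := by rw [sumId, hc]
  rw [h2]; ring

lemma sum_ind (M p q : ℕ) (hpI : p ∈ Icc 1 M) (hqI : q ∈ Icc 1 M) (hne : p ≠ q)
    (f : ℕ → ℝ) :
    ∑ i ∈ Icc 1 M, (if i = p ∨ i = q then (1 : ℝ) else 0) * f i = f p + f q := by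
  have key : ∀ i, (if i = p ∨ i = q then (1 : ℝ) else 0) * f i
      = (if i = p then f i else 0) + (if i = q then f i else 0) := by
    intro i
    rcases eq_or_ne i p with rfl | h1
    · simp [hne]
    · rcases eq_or_ne i q with rfl | h2
      · simp [h1]
      · simp [h1, h2]
  simp only [key]
  rw [Finset.sum_add_distrib, Finset.sum_ite_eq' _ p, Finset.sum_ite_eq' _ q,
    if_pos hpI, if_pos hqI]

lemma UV (M r : ℕ) :
    (∑ j ∈ Icc 1 M, W r j) + (∑ i ∈ Icc 1 M, W i r) = TT M r := by
  rw [TT, ← Finset.sum_add_distrib]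
  refine Finset.sum_congr rfl fun j _ => ?_
  unfold W
  rcases Nat.lt_trichotomy r j with h | h | h
  · rw [if_pos h, if_neg (by omega)]; ring
  · subst h; simp
  · rw [if_neg (by omega), if_pos h]; ring

lemma Skey (M : ℕ) (a c : ℝ) (p q : ℕ) (hp : 1 ≤ p) (hpq : p < q) (hq : q ≤ M) :
    S M (fun j => if j = p ∨ j = q then a + c else a)
      = a ^ 2 * AA M + a * c * (TT M p + TT M q) + c ^ 2 * ((q : ℝ) - (p : ℝ)) ^ 2 := by
  have hpI : p ∈ Icc 1 M := mem_Icc.2 ⟨hp, by omega⟩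
  have hqI : q ∈ Icc 1 M := mem_Icc.2 ⟨by omega, hq⟩
  have hne : p ≠ q := by omega
  set χ : ℕ → ℝ := fun i => if i = p ∨ i = q then (1 : ℝ) else 0 with hχ
  have step1 : S M (fun j => if j = p ∨ j = q then a + c else a)
      = a ^ 2 * (∑ i ∈ Icc 1 M, ∑ j ∈ Icc 1 M, W i j)
        + a * c * (∑ i ∈ Icc 1 M, (χ i * ∑ j ∈ Icc 1 M, W i j))
        + a * c * (∑ j ∈ Icc 1 M, (χ j * ∑ i ∈ Icc 1 M, W i j))
        + c ^ 2 * (∑ i ∈ Icc 1 M, (χ i * ∑ j ∈ Icc 1 M, (χ j * W i j))) := by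
    unfold S
    simp only [Finset.mul_sum]
    rw [Finset.sum_comm (f := fun j i => a * c * (χ j * W i j))]
    simp only [← Finset.sum_add_distrib]
    refine Finset.sum_congr rfl fun i _ => Finset.sum_congr rfl fun j _ => ?_
    simp only [hχ, W]
    split_ifs <;> ring
  rw [step1]
  have e2 : ∑ i ∈ Icc 1 M, (χ i * ∑ j ∈ Icc 1 M, W i j)
      = (∑ j ∈ Icc 1 M, W p j) + (∑ j ∈ Icc 1 M, W q j) :=
    sum_ind M p q hpI hqI hne _
  have e3 : ∑ j ∈ Icc 1 M, (χ j * ∑ i ∈ Icc 1 M, W i j)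
      = (∑ i ∈ Icc 1 M, W i p) + (∑ i ∈ Icc 1 M, W i q) :=
    sum_ind M p q hpI hqI hne _
  have e4inner : ∀ i, ∑ j ∈ Icc 1 M, (χ j * W i j) = W i p + W i q := fun i =>
    sum_ind M p q hpI hqI hne _
  have e4 : ∑ i ∈ Icc 1 M, (χ i * ∑ j ∈ Icc 1 M, (χ j * W i j))
      = ((q : ℝ) - (p : ℝ)) ^ 2 := by
    simp only [e4inner]
    rw [sum_ind M p q hpI hqI hne]
    have w1 : W p p = 0 := by simp [W]
    have w2 : W q q = 0 := by simp [W]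
    have w3 : W q p = 0 := by simp [W, Nat.not_lt.2 hpq.le]
    have w4 : W p q = ((q : ℝ) - (p : ℝ)) ^ 2 := by simp [W, hpq]
    rw [w1, w2, w3, w4]; ring
  rw [e2, e3, e4]
  unfold AA
  linear_combination a * c * UV M p + a * c * UV M q

theorem stmt17 (M : ℕ) (hM : 4 ≤ M) (a b : ℝ) (ha : 0 < a) (hab : a < b)
    (p q : ℕ) (hp : 1 ≤ p) (hpq : p < q) (hq : q ≤ M) :
    S M (fun j => if j = p ∨ j = q then b else a)
        ≤ S M (fun j => if j = 1 ∨ j = M then b else a)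
      ∧ (S M (fun j => if j = p ∨ j = q then b else a)
            = S M (fun j => if j = 1 ∨ j = M then b else a)
          ↔ p = 1 ∧ q = M) := by
  have hc : (0 : ℝ) < b - a := by linarith
  have key : ∀ (r s : ℕ), 1 ≤ r → r < s → s ≤ M →
      S M (fun j => if j = r ∨ j = s then b else a)
        = a ^ 2 * AA M + a * (b - a) * (TT M r + TT M s)
          + (b - a) ^ 2 * ((s : ℝ) - (r : ℝ)) ^ 2 := by
    intro r s h1 h2 h3
    have hfun : (fun j => if j = r ∨ j = s then b else a)
        = (fun j => if j = r ∨ j = s then a + (b - a) else a) := by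
      funext j; split_ifs <;> ring
    rw [hfun, Skey M a (b - a) r s h1 h2 h3]
  have hpqS := key p q hp hpq hq
  have h1MS := key 1 M (le_refl 1) (by omega) (le_refl M)
  have hTM : TT M M = TT M 1 := by
    have := Tdiff M M; simp at this; linarith
  have hT1 := Tdiff M p
  have hT2 := Tdiff M q
  have hpR : (1 : ℝ) ≤ (p : ℝ) := by exact_mod_cast hp
  have hpqR : (p : ℝ) < (q : ℝ) := by exact_mod_cast hpq
  have hqR : (q : ℝ) ≤ (M : ℝ) := by exact_mod_cast hq
  have hMR : (4 : ℝ) ≤ (M : ℝ) := by exact_mod_cast hM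
  have hdiff : S M (fun j => if j = 1 ∨ j = M then b else a)
      - S M (fun j => if j = p ∨ j = q then b else a)
      = a * (b - a) * (((p : ℝ) - 1) * M * ((M : ℝ) - p)
          + ((q : ℝ) - 1) * M * ((M : ℝ) - q))
        + (b - a) ^ 2 * (((M : ℝ) - 1) ^ 2 - ((q : ℝ) - (p : ℝ)) ^ 2) := by
    rw [h1MS, hpqS]
    push_cast
    push_cast at hT1 hT2
    linear_combination (a * (b - a)) * hT1 + (a * (b - a)) * hT2 + (a * (b - a)) * hTM
  have hA : 0 ≤ ((p : ℝ) - 1) * M * ((M : ℝ) - p) := by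
    apply mul_nonneg (mul_nonneg (by linarith) (by positivity)); linarith
  have hB : 0 ≤ ((q : ℝ) - 1) * M * ((M : ℝ) - q) := by
    apply mul_nonneg (mul_nonneg (by linarith) (by positivity)); linarith
  have hC : 0 ≤ ((M : ℝ) - 1) ^ 2 - ((q : ℝ) - (p : ℝ)) ^ 2 := by nlinarith
  have hX : 0 ≤ a * (b - a) * (((p : ℝ) - 1) * M * ((M : ℝ) - p)
      + ((q : ℝ) - 1) * M * ((M : ℝ) - q)) := by
    apply mul_nonneg (by positivity); linarith
  have hY : 0 ≤ (b - a) ^ 2 * (((M : ℝ) - 1) ^ 2 - ((q : ℝ) - (p : ℝ)) ^ 2) :=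
    mul_nonneg (sq_nonneg _) hC
  refine ⟨by linarith, ?_, ?_⟩
  · intro heq
    have hY0 : (b - a) ^ 2 * (((M : ℝ) - 1) ^ 2 - ((q : ℝ) - (p : ℝ)) ^ 2) = 0 := by
      linarith
    have hC0 : ((M : ℝ) - 1) ^ 2 - ((q : ℝ) - (p : ℝ)) ^ 2 = 0 := by
      rcases mul_eq_zero.1 hY0 with h | h
      · exact absurd h (by positivity)
      · exact h
    have hfac : (((M : ℝ) - 1) - ((q : ℝ) - (p : ℝ)))
        * (((M : ℝ) - 1) + ((q : ℝ) - (p : ℝ))) = 0 := by linear_combination hC0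
    have hpos : 0 < ((M : ℝ) - 1) + ((q : ℝ) - (p : ℝ)) := by linarith
    have hd : ((M : ℝ) - 1) = (q : ℝ) - (p : ℝ) := by
      rcases mul_eq_zero.1 hfac with h | h
      · linarith
      · linarith
    have hp1 : (p : ℝ) = 1 := by linarith
    have hqM : (q : ℝ) = (M : ℝ) := by linarith
    exact ⟨by exact_mod_cast hp1, by exact_mod_cast hqM⟩
  · rintro ⟨rfl, rfl⟩; rfl
end
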